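/- Suppose 0 < C₁ < C₂ < K and F(1) < (1 − C₂/K) * exp(λ). Let p₁ be the unique solution in (0,1) of F(p) = (1 − C₁/K) * exp(λ p) and let p₂ be the unique solution in (0,1) of F(p) = (1 − C₂/K) * exp(λ p). Then p₁ < p₂ (the equilibrium probability of not protecting is strictly increasing in the protection cost C). -/

import Mathlib

/-!
Write `F(p) = ∑_{x ∈ S} ∏_t (a_t p)^{x_t} / x_t!` with `a_t = λ r_t`. Since `S` is a finite lower
set of `ℕ^T`, differentiating termwise and shifting `x ↦ x - e_t` gives
`F'(p) = ∑_t a_t F_t(p)`, where `F_t` is the same sum over those `y ∈ S` with `y + e_t ∈ S`.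
A maximal element of `S` is missing from every `F_t`, so `F' < λ F` for `p > 0`, i.e.
`F(p) e^{-λp}` is strictly decreasing on `[0, ∞)`. The two equilibrium equations say that this
function takes the values `1 - C₁/K > 1 - C₂/K` at `p₁` and `p₂`.
-/

open Finset

namespace VirusProtection

variable {ι : Type*}

noncomputable def poissonCoeff [Fintype ι] (a : ι → ℝ) (x : ι → ℕ) : ℝ :=
  ∏ t, a t ^ x t / (x t).factorial

lemma prod_mul_pow_div_factorial [Fintype ι] (a : ι → ℝ) (p : ℝ) (x : ι → ℕ) :
    ∏ t, (a t * p) ^ x t / ((x t).factorial : ℝ) = poissonCoeff a x * p ^ ∑ t, x t := by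
  rw [poissonCoeff, ← prod_pow_eq_pow_sum, ← prod_mul_distrib]
  exact prod_congr rfl fun t _ => by ring

lemma add_one_mul_poissonCoeff_add_single [Fintype ι] [DecidableEq ι] (a : ι → ℝ) (y : ι → ℕ)
    (t : ι) :
    ((y t : ℝ) + 1) * poissonCoeff a (y + Pi.single t 1) = a t * poissonCoeff a y := by
  unfold poissonCoeff
  rw [← mul_prod_erase _ _ (mem_univ t), ← mul_prod_erase _ _ (mem_univ t)]
  have hrest : ∏ u ∈ univ.erase t,
        a u ^ (y + Pi.single t 1 : ι → ℕ) u / ((y + Pi.single t 1 : ι → ℕ) u).factorial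
      = ∏ u ∈ univ.erase t, a u ^ y u / ((y u).factorial : ℝ) :=
    prod_congr rfl fun u hu => by simp [Pi.single_eq_of_ne (ne_of_mem_erase hu)]
  rw [hrest, Pi.add_apply, Pi.single_eq_same, Nat.factorial_succ, pow_succ]
  push_cast
  field_simp

lemma sum_add_single [Fintype ι] [DecidableEq ι] (y : ι → ℕ) (t : ι) :
    ∑ u, (y + Pi.single t 1 : ι → ℕ) u = ∑ u, y u + 1 := by
  simp [sum_add_distrib]

lemma sum_eq_sum_add_single [Fintype ι] [DecidableEq ι] {A : Finset (ι → ℕ)}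
    (hA : IsLowerSet (A : Set (ι → ℕ))) (t : ι) (f : (ι → ℕ) → ℝ) (hf : ∀ x, x t = 0 → f x = 0) :
    ∑ x ∈ A, f x = ∑ y ∈ A with y + Pi.single t 1 ∈ A, f (y + Pi.single t 1) := by
  have hcancel : ∀ x : ι → ℕ, x t ≠ 0 → x - Pi.single t 1 + Pi.single t 1 = x := by
    intro x hx
    ext u
    rcases eq_or_ne u t with rfl | hu
    · simp only [Pi.add_apply, Pi.sub_apply, Pi.single_eq_same]
      omega
    · simp [Pi.single_eq_of_ne hu]
  rw [← sum_filter_of_ne (p := fun x => x t ≠ 0) fun x _ hx h => hx (hf x h)]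
  refine sum_nbij' (· - Pi.single t 1) (· + Pi.single t 1) ?_ ?_ ?_ ?_ ?_
  · intro x hx
    rw [mem_filter] at hx ⊢
    exact ⟨hA tsub_le_self hx.1, by rw [hcancel x hx.2]; exact hx.1⟩
  · intro y hy
    rw [mem_filter] at hy ⊢
    exact ⟨hy.2, by simp⟩
  · intro x hx
    exact hcancel x (mem_filter.1 hx).2
  · intro y _
    exact add_tsub_cancel_right y _
  · intro x hx
    rw [hcancel x (mem_filter.1 hx).2]

lemma isLowerSet_setOf_sum_lt [Fintype ι] {g : ι → ℕ → ℝ} (hg : ∀ t, Monotone (g t)) (c : ℝ) :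
    IsLowerSet {x : ι → ℕ | ∑ t, g t (x t) < c} :=
  fun _ _ hyx hx => lt_of_le_of_lt (sum_le_sum fun t _ => hg t (hyx t)) hx

/-- `e^{-(∑ a) p} * truncExp A a p` is the probability that independent Poisson variables of
means `a t * p` lie in `A`; for `A` all of `ι → ℕ` the sum would be `exp ((∑ a) * p)`. -/
noncomputable def truncExp [Fintype ι] (A : Finset (ι → ℕ)) (a : ι → ℝ) (p : ℝ) : ℝ :=
  ∑ x ∈ A, ∏ t, (a t * p) ^ x t / ((x t).factorial : ℝ)

lemma hasDerivAt_truncExp [Fintype ι] [DecidableEq ι] {A : Finset (ι → ℕ)}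
    (hA : IsLowerSet (A : Set (ι → ℕ))) (a : ι → ℝ) (p : ℝ) :
    HasDerivAt (truncExp A a) (∑ t, a t * truncExp {y ∈ A | y + Pi.single t 1 ∈ A} a p) p := by
  suffices h : ∑ t, a t * truncExp {y ∈ A | y + Pi.single t 1 ∈ A} a p
      = ∑ x ∈ A, poissonCoeff a x * ((∑ u, x u : ℕ) * p ^ (∑ u, x u - 1)) by
    rw [h, show truncExp A a = fun p => ∑ x ∈ A, poissonCoeff a x * p ^ ∑ t, x t from
      funext fun p => sum_congr rfl fun x _ => prod_mul_pow_div_factorial a p x]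
    exact HasDerivAt.fun_sum fun x _ => (hasDerivAt_pow (∑ t, x t) p).const_mul (poissonCoeff a x)
  calc ∑ t, a t * truncExp {y ∈ A | y + Pi.single t 1 ∈ A} a p
      = ∑ t, ∑ y ∈ A with y + Pi.single t 1 ∈ A,
          ((y + Pi.single t 1 : ι → ℕ) t : ℝ) * (poissonCoeff a (y + Pi.single t 1) *
            p ^ (∑ u, (y + Pi.single t 1 : ι → ℕ) u - 1)) := by
        refine sum_congr rfl fun t _ => ?_
        rw [truncExp, mul_sum]
        refine sum_congr rfl fun y _ => ?_
        rw [prod_mul_pow_div_factorial, sum_add_single, Nat.add_sub_cancel, Pi.add_apply,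
          Pi.single_eq_same, Nat.cast_add_one, ← mul_assoc ((y t : ℝ) + 1),
          add_one_mul_poissonCoeff_add_single, mul_assoc]
    _ = ∑ t, ∑ x ∈ A, (x t : ℝ) * (poissonCoeff a x * p ^ (∑ u, x u - 1)) :=
        sum_congr rfl fun t _ => (sum_eq_sum_add_single hA t
          (fun x => (x t : ℝ) * (poissonCoeff a x * p ^ (∑ u, x u - 1)))
          fun x hx => by simp [hx]).symm
    _ = ∑ x ∈ A, poissonCoeff a x * ((∑ u, x u : ℕ) * p ^ (∑ u, x u - 1)) := by
        rw [sum_comm]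
        refine sum_congr rfl fun x _ => ?_
        rw [Nat.cast_sum, sum_mul, mul_sum]
        exact sum_congr rfl fun t _ => by ring

lemma sum_mul_truncExp_filter_lt [Fintype ι] [DecidableEq ι] [Nonempty ι] {A : Finset (ι → ℕ)}
    (hA : A.Nonempty) {a : ι → ℝ} (ha : ∀ t, 0 < a t) {p : ℝ} (hp : 0 < p) :
    ∑ t, a t * truncExp {y ∈ A | y + Pi.single t 1 ∈ A} a p < (∑ t, a t) * truncExp A a p := by
  have hterm : ∀ x : ι → ℕ, 0 < ∏ t, (a t * p) ^ x t / ((x t).factorial : ℝ) :=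
    fun x => prod_pos fun t _ => by have := ha t; positivity
  obtain ⟨xmax, hxmax, hmax⟩ := A.exists_max_image (fun x => ∑ t, x t) hA
  have hxmax_top : ∀ t, xmax + Pi.single t 1 ∉ A := fun t hmem => by
    have := hmax _ hmem
    rw [sum_add_single] at this
    omega
  rw [sum_mul]
  obtain ⟨t₀⟩ := ‹Nonempty ι›
  refine sum_lt_sum (fun t _ => ?_) ⟨t₀, mem_univ _, ?_⟩
  · exact mul_le_mul_of_nonneg_left
      (sum_le_sum_of_subset_of_nonneg (filter_subset _ _) fun x _ _ => (hterm x).le) (ha t).le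
  · refine mul_lt_mul_of_pos_left ?_ (ha t₀)
    exact sum_lt_sum_of_subset (filter_subset _ _) hxmax
      (fun h => hxmax_top t₀ (mem_filter.1 h).2) (hterm xmax) fun x _ _ => (hterm x).le

lemma strictAntiOn_truncExp_mul_exp [Fintype ι] [Nonempty ι] {A : Finset (ι → ℕ)}
    (hA : IsLowerSet (A : Set (ι → ℕ))) (hA₀ : A.Nonempty) {a : ι → ℝ} (ha : ∀ t, 0 < a t) :
    StrictAntiOn (fun p => truncExp A a p * Real.exp (-((∑ t, a t) * p))) (Set.Ici 0) := by
  classical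
  have hderiv : ∀ p, HasDerivAt (fun p => truncExp A a p * Real.exp (-((∑ t, a t) * p)))
      ((∑ t, a t * truncExp {y ∈ A | y + Pi.single t 1 ∈ A} a p
        - (∑ t, a t) * truncExp A a p) * Real.exp (-((∑ t, a t) * p))) p := fun p => by
    refine ((hasDerivAt_truncExp hA a p).mul
      ((hasDerivAt_id p).const_mul (∑ t, a t)).neg.exp).congr_deriv ?_
    simp only [id, mul_one, Pi.neg_apply]
    ring
  refine strictAntiOn_of_deriv_neg (convex_Ici 0)
    (fun p _ => (hderiv p).continuousAt.continuousWithinAt) fun p hp => ?_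
  rw [interior_Ici] at hp
  rw [(hderiv p).deriv]
  exact mul_neg_of_neg_of_pos (sub_neg.2 (sum_mul_truncExp_filter_lt hA₀ ha hp)) (Real.exp_pos _)

end VirusProtection

open VirusProtection

theorem equilibrium_increasing_in_cost_general (T : ℕ) (hT : 1 ≤ T)
    (lam : ℝ) (hlam : 0 < lam)
    (r : Fin T → ℝ) (hr : ∀ t, 0 < r t) (hrsum : ∑ t, r t = 1)
    (τ : Fin T → ℝ) (hτ : ∀ t, 0 < τ t)
    (K C₁ C₂ : ℝ) (hK : 0 < K) (hC₁₂ : C₁ < C₂)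
    (S : Set (Fin T → ℕ))
    (hSdef : S = {x : Fin T → ℕ | ∑ t, (x t : ℝ) * τ t / (1 + τ t) < 1})
    (hSfin : S.Finite)
    (F : ℝ → ℝ)
    (hF : ∀ p : ℝ, F p =
      ∑ x ∈ hSfin.toFinset, ∏ t, (lam * r t * p) ^ (x t) / (Nat.factorial (x t) : ℝ))
    (p₁ p₂ : ℝ)
    (hp₁ : p₁ ∈ Set.Ioo (0 : ℝ) 1) (hp₁eq : F p₁ = (1 - C₁ / K) * Real.exp (lam * p₁))
    (hp₂ : p₂ ∈ Set.Ioo (0 : ℝ) 1) (hp₂eq : F p₂ = (1 - C₂ / K) * Real.exp (lam * p₂)) :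
    p₁ < p₂ := by
  have : Nonempty (Fin T) := ⟨⟨0, hT⟩⟩
  have hS : IsLowerSet (hSfin.toFinset : Set (Fin T → ℕ)) := by
    rw [hSfin.coe_toFinset, hSdef]
    refine isLowerSet_setOf_sum_lt (g := fun t n => (n : ℝ) * τ t / (1 + τ t))
      (fun t m n hmn => ?_) 1
    have := hτ t
    dsimp only
    gcongr
  have hS₀ : hSfin.toFinset.Nonempty := ⟨0, by simp [hSdef]⟩
  have hanti : StrictAntiOn (fun p => F p * Real.exp (-(lam * p))) (Set.Ici 0) := by
    have hsum : ∑ t, lam * r t = lam := by rw [← mul_sum, hrsum, mul_one]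
    have hFt : F = truncExp hSfin.toFinset (fun t => lam * r t) := funext hF
    simpa only [hFt, hsum] using
      strictAntiOn_truncExp_mul_exp hS hS₀ fun t => mul_pos hlam (hr t)
  have hvalue : ∀ p C, F p = (1 - C / K) * Real.exp (lam * p) →
      F p * Real.exp (-(lam * p)) = 1 - C / K := by
    intro p C hp
    rw [hp, mul_assoc, ← Real.exp_add, add_neg_cancel, Real.exp_zero, mul_one]
  refine (hanti.lt_iff_gt (Set.mem_Ici.2 hp₂.1.le) (Set.mem_Ici.2 hp₁.1.le)).1 ?_
  rw [hvalue p₁ C₁ hp₁eq, hvalue p₂ C₂ hp₂eq]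
  gcongr

/-- If `0 < C₁ < C₂ < K` and `F(1) < (1 − C₂/K) * exp λ`, and
`p₁, p₂ ∈ (0,1)` are the (unique) solutions of `F(p) = (1 − C₁/K) * exp (λ p)`
and `F(p) = (1 − C₂/K) * exp (λ p)` respectively, then `p₁ < p₂`: the
equilibrium probability of not protecting is strictly increasing in the
protection cost `C`. -/
theorem equilibrium_increasing_in_cost (T : ℕ) (hT : 1 ≤ T)
    (lam : ℝ) (hlam : 0 < lam)
    (r : Fin T → ℝ) (hr : ∀ t, 0 < r t) (hrsum : ∑ t, r t = 1)
    (τ : Fin T → ℝ) (hτ : ∀ t, 0 < τ t)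
    (K C₁ C₂ : ℝ) (hK : 0 < K) (hC₁ : 0 < C₁) (hC₁₂ : C₁ < C₂) (hC₂K : C₂ < K)
    (S : Set (Fin T → ℕ))
    (hSdef : S = {x : Fin T → ℕ | ∑ t, (x t : ℝ) * τ t / (1 + τ t) < 1})
    (hSfin : S.Finite)
    (F : ℝ → ℝ)
    (hF : ∀ p : ℝ, F p =
      ∑ x ∈ hSfin.toFinset, ∏ t, (lam * r t * p) ^ (x t) / (Nat.factorial (x t) : ℝ))
    (hcond : F 1 < (1 - C₂ / K) * Real.exp lam)
    (p₁ p₂ : ℝ)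
    (hp₁ : p₁ ∈ Set.Ioo (0 : ℝ) 1) (hp₁eq : F p₁ = (1 - C₁ / K) * Real.exp (lam * p₁))
    (hp₂ : p₂ ∈ Set.Ioo (0 : ℝ) 1) (hp₂eq : F p₂ = (1 - C₂ / K) * Real.exp (lam * p₂)) :
    p₁ < p₂ :=
  equilibrium_increasing_in_cost_general T hT lam hlam r hr hrsum τ hτ K C₁ C₂ hK hC₁₂ S hSdef hSfin
    F hF p₁ p₂ hp₁ hp₁eq hp₂ hp₂eq
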